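/- Every sequence of KNV machine transitions that does not use the β-contraction rule (rule 6) and starts from a well-formed configuration is finite; i.e., the restriction of the KNV transition relation excluding rule 6 is strongly normalizing on well-formed configurations. -/
import Mathlib


set_option autoImplicit true

/-- Lambda terms with de Bruijn indices. -/
inductive Tm : Type
  | var : Nat → Tm
  | app : Tm → Tm → Tm
  | lam : Tm → Tm
  deriving DecidableEq, Repr

/-- Shifting `T↑ᵏᵢ`: add `i` to all indices `≥ k`. -/
def shiftTm (i : Nat) : Nat → Tm → Tm
  | k, .var n => if n ≥ k then .var (n + i) else .var n
  | k, .app t1 t2 => .app (shiftTm i k t1) (shiftTm i k t2)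
  | k, .lam t => .lam (shiftTm i (k + 1) t)

/-- Substitution `T⟨i←T'⟩`. -/
def substTm (t' : Tm) : Nat → Tm → Tm
  | i, .var n => if n < i then .var n else if n = i then shiftTm i 0 t' else .var (n - 1)
  | i, .app t1 t2 => .app (substTm t' i t1) (substTm t' i t2)
  | i, .lam t => .lam (substTm t' (i + 1) t)

/-- `ClosedUnder k t`: all free de Bruijn indices of `t` are `< k`. -/
def ClosedUnder : Nat → Tm → Prop
  | k, .var n => n < k
  | k, .app t u => ClosedUnder k t ∧ ClosedUnder k u
  | k, .lam t => ClosedUnder (k + 1) t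

def sizeTm : Tm → Nat
  | .var _ => 1
  | .app t u => 1 + sizeTm t + sizeTm u
  | .lam t => 1 + sizeTm t

mutual
  /-- Strong normal forms: N ::= Lam N | a. -/
  inductive IsNf : Tm → Prop
    | lam : IsNf t → IsNf (Tm.lam t)
    | ne : IsNe t → IsNf t
  /-- Neutral terms: a ::= Var n | App a N. -/
  inductive IsNe : Tm → Prop
    | var : IsNe (Tm.var n)
    | app : IsNe t → IsNf u → IsNe (Tm.app t u)
end

mutual
  /-- Weak normal forms (fireball): w ::= Lam T | i. -/
  inductive IsWnf : Tm → Prop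
    | lam : IsWnf (Tm.lam t)
    | inert : IsInert t → IsWnf t
  /-- Inert terms: i ::= Var n | App i w. -/
  inductive IsInert : Tm → Prop
    | var : IsInert (Tm.var n)
    | app : IsInert t → IsWnf u → IsInert (Tm.app t u)
end

/-- One-hole contexts (outside-in representation as a tree). -/
inductive Ctx : Type
  | hole : Ctx
  | appL : Ctx → Tm → Ctx   -- App C t : hole in the function position
  | appR : Tm → Ctx → Ctx   -- App t C : hole in the argument position
  | lamC : Ctx → Ctx
  deriving DecidableEq

def plugC : Ctx → Tm → Tm
  | .hole, t => t
  | .appL c u, t => .app (plugC c t) u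
  | .appR u c, t => .app u (plugC c t)
  | .lamC c, t => .lam (plugC c t)

/-- Weak right-to-left CbV contexts: F ::= □ | App F w | App T F. -/
inductive IsFc : Ctx → Prop
  | hole : IsFc .hole
  | appL : IsFc c → IsWnf w → IsFc (.appL c w)
  | appR : IsFc c → IsFc (.appR t c)

mutual
  /-- H ::= App H N | App i R. -/
  inductive IsHc : Ctx → Prop
    | appL : IsHc c → IsNf n → IsHc (.appL c n)
    | appR : IsInert i → IsRc c → IsHc (.appR i c)
  /-- rrCbV contexts: R ::= Lam R | H | F. -/
  inductive IsRc : Ctx → Prop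
    | lam : IsRc c → IsRc (.lamC c)
    | h : IsHc c → IsRc c
    | f : IsFc c → IsRc c
end

/-- βwnf-reduction in a weak right-to-left CbV context. -/
def RedF (t t' : Tm) : Prop :=
  ∃ c b w, IsFc c ∧ IsWnf w ∧
    t = plugC c (.app (.lam b) w) ∧ t' = plugC c (substTm w 0 b)

/-- One-step rrCbV reduction: βwnf-contraction in an rrCbV context. -/
def RedR (t t' : Tm) : Prop :=
  ∃ c b w, IsRc c ∧ IsWnf w ∧
    t = plugC c (.app (.lam b) w) ∧ t' = plugC c (substTm w 0 b)

/-- Full β-reduction (one step, anywhere). -/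
inductive Beta : Tm → Tm → Prop
  | beta : Beta (.app (.lam t) u) (substTm u 0 t)
  | appL : Beta t t' → Beta (.app t u) (.app t' u)
  | appR : Beta u u' → Beta (.app t u) (.app t u')
  | lam : Beta t t' → Beta (.lam t) (.lam t')

mutual
  /-- Machine weak normal forms: W ::= ⟨Lam T, E⟩ | I. -/
  inductive MW : Type
    | clos : Tm → MEnv → MW
    | inert : MI → MW
  /-- Machine inert terms: I ::= V(n) | App I W. -/
  inductive MI : Type
    | avar : Nat → MI
    | mapp : MI → MW → MI
  /-- Environments: lists of machine wnfs. -/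
  inductive MEnv : Type
    | nil : MEnv
    | cons : MW → MEnv → MEnv
end

def lookupEnv : MEnv → Nat → Option MW
  | .nil, _ => none
  | .cons w _, 0 => some w
  | .cons _ e, n + 1 => lookupEnv e n

/-- Stack frames of the KNV machine. -/
inductive Frame : Type
  | closF : Tm → MEnv → Frame  -- (T,E)□
  | argW : MW → Frame          -- □W
  | nfArg : Tm → Frame         -- N□ : App □ N with N a strong nf
  | lamF : Frame               -- λ□
  | inertF : MI → Frame        -- I□ : App I □

/-- Configurations of the KNV machine. -/
inductive Conf : Type
  | eval : Tm → MEnv → List Frame → Nat → Conf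
  | apply : MW → List Frame → Nat → Conf
  | norm : Tm → Nat → List Frame → Conf

/-- Side condition for rules 8–10: the top of the stack is not `(T,E)□` nor `□W`. -/
def notElim : List Frame → Prop
  | Frame.closF _ _ :: _ => False
  | Frame.argW _ :: _ => False
  | _ => True

/-- The 13 transition rules of the KNV machine (Figure 3). -/
inductive Step : Conf → Conf → Prop
  | r1 : Step (.eval (.app t1 t2) e s m) (.eval t2 e (.closF t1 e :: s) m)
  | r2 : Step (.eval (.lam t) e s m) (.apply (.clos t e) s m)
  | r3 : Step (.eval (.var 0) (.cons w e) s m) (.apply w s m)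
  | r4 : Step (.eval (.var (n + 1)) (.cons w e) s m) (.eval (.var n) e s m)
  | r5 : Step (.apply w (.closF t e :: s) m) (.eval t e (.argW w :: s) m)
  | r6 : Step (.apply (.clos t e) (.argW w :: s) m) (.eval t (.cons w e) s m)
  | r7 : Step (.apply (.inert i) (.argW w :: s) m) (.apply (.inert (.mapp i w)) s m)
  | r8 : notElim s →
      Step (.apply (.clos t e) s m)
        (.eval t (.cons (.inert (.avar (m + 1))) e) (.lamF :: s) (m + 1))
  | r9 : notElim s → Step (.apply (.inert (.mapp i w)) s m) (.apply w (.inertF i :: s) m)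
  | r10 : notElim s → Step (.apply (.inert (.avar n)) s m) (.norm (.var (m - n)) m s)
  | r11 : Step (.norm t m (.inertF i :: s)) (.apply (.inert i) (.nfArg t :: s) m)
  | r12 : Step (.norm t m (.lamF :: s)) (.norm (.lam t) (m - 1) s)
  | r13 : Step (.norm a m (.nfArg t :: s)) (.norm (.app a t) m s)

/-- KNV transitions without the β-contraction rule (6). -/
inductive StepNB : Conf → Conf → Prop
  | r1 : StepNB (.eval (.app t1 t2) e s m) (.eval t2 e (.closF t1 e :: s) m)
  | r2 : StepNB (.eval (.lam t) e s m) (.apply (.clos t e) s m)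
  | r3 : StepNB (.eval (.var 0) (.cons w e) s m) (.apply w s m)
  | r4 : StepNB (.eval (.var (n + 1)) (.cons w e) s m) (.eval (.var n) e s m)
  | r5 : StepNB (.apply w (.closF t e :: s) m) (.eval t e (.argW w :: s) m)
  | r7 : StepNB (.apply (.inert i) (.argW w :: s) m) (.apply (.inert (.mapp i w)) s m)
  | r8 : notElim s →
      StepNB (.apply (.clos t e) s m)
        (.eval t (.cons (.inert (.avar (m + 1))) e) (.lamF :: s) (m + 1))
  | r9 : notElim s → StepNB (.apply (.inert (.mapp i w)) s m) (.apply w (.inertF i :: s) m)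
  | r10 : notElim s → StepNB (.apply (.inert (.avar n)) s m) (.norm (.var (m - n)) m s)
  | r11 : StepNB (.norm t m (.inertF i :: s)) (.apply (.inert i) (.nfArg t :: s) m)
  | r12 : StepNB (.norm t m (.lamF :: s)) (.norm (.lam t) (m - 1) s)
  | r13 : StepNB (.norm a m (.nfArg t :: s)) (.norm (.app a t) m s)

mutual
  /-- Stack shape grammar: S1. -/
  inductive WS1 : List Frame → Prop
    | closF : WS1 s → WS1 (.closF t e :: s)
    | argW : WS1 s → WS1 (.argW w :: s)
    | s3 : WS3 s → WS1 s
  /-- Stack shape grammar: S2. -/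
  inductive WS2 : List Frame → Prop
    | nfArg : IsNf t → WS2 s → WS2 (.nfArg t :: s)
    | s3 : WS3 s → WS2 s
  /-- Stack shape grammar: S3. -/
  inductive WS3 : List Frame → Prop
    | nil : WS3 []
    | lamF : WS3 s → WS3 (.lamF :: s)
    | inertF : WS2 s → WS3 (.inertF i :: s)
end

/-- Well-formed configurations. -/
inductive WFConf : Conf → Prop
  | eval : WS1 s → WFConf (.eval t e s m)
  | applyW : WS1 s → WFConf (.apply w s m)
  | applyI : WS2 s → WFConf (.apply (.inert i) s m)
  | normNe : IsNe a → WS2 s → WFConf (.norm a m s)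
  | normNf : IsNf n → WS3 s → WFConf (.norm n m s)

mutual
  /-- Decoding of machine weak normal forms at a de Bruijn level. -/
  inductive DecW : MW → Nat → Tm → Prop
    | clos : DecT t e m 1 b → DecW (.clos t e) m (.lam b)
    | inert : DecI i m t → DecW (.inert i) m t
  /-- Decoding of machine inert terms at a de Bruijn level. -/
  inductive DecI : MI → Nat → Tm → Prop
    | avar : DecI (.avar n) m (.var (m - n))
    | mapp : DecI i m t1 → DecW w m t2 → DecI (.mapp i w) m (.app t1 t2)
  /-- Decoding of a term in an environment at level `m` and binder depth `d`
      (simultaneous substitution of decoded environment entries). -/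
  inductive DecT : Tm → MEnv → Nat → Nat → Tm → Prop
    | varLt : n < d → DecT (.var n) e m d (.var n)
    | varEnv : d ≤ n → lookupEnv e (n - d) = some w → DecW w m t →
        DecT (.var n) e m d (shiftTm d 0 t)
    | varFree : d ≤ n → lookupEnv e (n - d) = none → DecT (.var n) e m d (.var n)
    | app : DecT t1 e m d u1 → DecT t2 e m d u2 →
        DecT (.app t1 t2) e m d (.app u1 u2)
    | lam : DecT t e m (d + 1) b → DecT (.lam t) e m d (.lam b)
end

/-- Annotated terms and frames. -/
inductive Ann : Type
  | tm : Tm → Ann     -- T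
  | tmW : Tm → Ann    -- Tᵂ
  | tmN : Tm → Ann    -- Tᴺ
  | funL : Tm → Ann   -- T□ : App T □
  | argR : Tm → Ann   -- □T : App □ T
  | funLW : Tm → Ann  -- (I□)ᵂ : App I □
  | argRN : Tm → Ann  -- (N□)ᴺ : App □ N
  | lamF : Ann        -- λ□
  deriving DecidableEq

def rankAnn : Ann → Nat
  | .tm _ => 0
  | .funL _ => 1
  | .argR _ => 2
  | .tmW _ => 3
  | .funLW _ => 4
  | .argRN _ => 5
  | .lamF => 6
  | .tmN _ => 7

/-- The strict order on annotated terms/frames from the paper. -/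
def AnnLt (a b : Ann) : Prop := rankAnn a < rankAnn b

/-- Reversed lexicographic extension of `AnnLt` to lists. -/
def RLex (l1 l2 : List Ann) : Prop := List.Lex AnnLt l1.reverse l2.reverse

def plugA : Ann → Tm → Tm
  | .funL t, u => .app t u
  | .argR t, u => .app u t
  | .funLW t, u => .app t u
  | .argRN t, u => .app u t
  | .lamF, u => .lam u
  | .tm t, _ => t
  | .tmW t, _ => t
  | .tmN t, _ => t

/-- Plugging an annotated decomposition (head must be an annotated term). -/
def plugD : List Ann → Option Tm
  | [] => none
  | a :: l =>
    match a with
    | .tm t => some (l.foldl (fun u f => plugA f u) t)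
    | .tmW t => some (l.foldl (fun u f => plugA f u) t)
    | .tmN t => some (l.foldl (fun u f => plugA f u) t)
    | _ => none

/-- Decoding of stacks to lists of annotated frames; the `Nat` is the number
    of λ□ frames in the stack (the current de Bruijn level). -/
inductive DecS : List Frame → Nat → List Ann → Prop
  | nil : DecS [] 0 []
  | closF : DecT t e m 0 t' → DecS s m l → DecS (.closF t e :: s) m (.funL t' :: l)
  | argW : DecW w m t' → DecS s m l → DecS (.argW w :: s) m (.argR t' :: l)
  | nfArg : DecS s m l → DecS (.nfArg t :: s) m (.argRN t :: l)
  | lamF : DecS s m l → DecS (.lamF :: s) (m + 1) (.lamF :: l)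
  | inertF : DecI i m t' → DecS s m l → DecS (.inertF i :: s) m (.funLW t' :: l)

/-- Decoding of configurations to annotated decompositions. -/
inductive DecConf : Conf → List Ann → Prop
  | eval : DecT t e m 0 t' → DecS s m l → DecConf (.eval t e s m) (.tm t' :: l)
  | apply : DecW w m t' → DecS s m l → DecConf (.apply w s m) (.tmW t' :: l)
  | norm : DecS s m l → DecConf (.norm t m s) (.tmN t :: l)

/-- Frames over plain lambda terms (for the context grammars of Figure 5). -/
inductive Fr : Type
  | funL : Tm → Fr  -- flapp T : App T □
  | argR : Tm → Fr  -- frapp T : App □ T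
  | lamF : Fr       -- λ□
  deriving DecidableEq

mutual
  /-- Inside-out grammar: S1. -/
  inductive IoS1 : List Fr → Prop
    | funL : IoS1 s → IoS1 (.funL t :: s)
    | argR : IsWnf w → IoS1 s → IoS1 (.argR w :: s)
    | s3 : IoS3 s → IoS1 s
  /-- Inside-out grammar: S2. -/
  inductive IoS2 : List Fr → Prop
    | argR : IsNf n → IoS2 s → IoS2 (.argR n :: s)
    | s3 : IoS3 s → IoS2 s
  /-- Inside-out grammar: S3. -/
  inductive IoS3 : List Fr → Prop
    | nil : IoS3 []
    | lamF : IoS3 s → IoS3 (.lamF :: s)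
    | funL : IsInert i → IoS2 s → IoS3 (.funL i :: s)
end

mutual
  /-- Outside-in grammar: F. -/
  inductive OiF : List Fr → Prop
    | nil : OiF []
    | argR : IsWnf w → OiF s → OiF (.argR w :: s)
    | funL : OiF s → OiF (.funL t :: s)
  /-- Outside-in grammar: H. -/
  inductive OiH : List Fr → Prop
    | argR : IsNf n → OiH s → OiH (.argR n :: s)
    | funL : IsInert i → OiR s → OiH (.funL i :: s)
  /-- Outside-in grammar: R. -/
  inductive OiR : List Fr → Prop
    | lamF : OiR s → OiR (.lamF :: s)
    | h : OiH s → OiR s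
    | f : OiF s → OiR s
end

def ITm : Tm := .lam (.var 0)
def KTm : Tm := .lam (.lam (.var 1))
def omegaSmall : Tm := .lam (.app (.var 0) (.var 0))
def OmegaTm : Tm := .app omegaSmall omegaSmall

def churchBody : Nat → Tm
  | 0 => .var 0
  | n + 1 => .app (.var 1) (churchBody n)

/-- The n-th Church numeral. -/
def church (n : Nat) : Tm := .lam (.lam (churchBody n))

/-- eₙ = Lam (App (App cₙ ω) 0). -/
def eTm (n : Nat) : Tm := .lam (.app (.app (church n) omegaSmall) (.var 0))
mutual
def wWgt : MW → Nat
  | .clos t e => fWgt t 1 e + 2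
  | .inert i => iWgt i + 1
termination_by w => sizeOf w
decreasing_by all_goals (simp_wf; try omega)
def iWgt : MI → Nat
  | .avar _ => 1
  | .mapp i w => iWgt i + wWgt w + 2
termination_by i => sizeOf i
decreasing_by all_goals (simp_wf; try omega)
def lkWgt : MEnv → Nat → Nat
  | .nil, _ => 0
  | .cons w _, 0 => wWgt w
  | .cons _ e, n + 1 => lkWgt e n
termination_by e _ => sizeOf e
decreasing_by all_goals (simp_wf; try omega)
def fWgt : Tm → Nat → MEnv → Nat
  | .var n, d, e => n + 1 + (if n < d then 2 else lkWgt e (n - d))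
  | .app t1 t2, d, e => 5 + fWgt t1 d e + fWgt t2 d e
  | .lam t, d, e => fWgt t (d + 1) e + 3
termination_by t _ e => sizeOf t + sizeOf e
decreasing_by all_goals (simp_wf; try omega)
end

lemma fWgt_shift (k : Nat) : ∀ (t : Tm) (d : Nat) (e : MEnv),
    fWgt t (d + 1) e = fWgt t d (.cons (.inert (.avar k)) e) := by
  intro t
  induction t with
  | var n =>
    intro d e
    simp only [fWgt]
    rcases Nat.lt_trichotomy n d with h | h | h
    · rw [if_pos (by omega), if_pos h]
    · subst h
      rw [if_pos (by omega), if_neg (by omega)]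
      simp [lkWgt, wWgt, iWgt]
    · rw [if_neg (by omega), if_neg (by omega)]
      have : n - d = (n - (d + 1)) + 1 := by omega
      rw [this]
      simp [lkWgt]
  | app t1 t2 ih1 ih2 => intro d e; simp [fWgt, ih1, ih2]
  | lam t ih => intro d e; simp [fWgt, ih]

def frWgt : Frame → Nat
  | .closF t e => fWgt t 0 e + 4
  | .argW w => wWgt w + 3
  | .nfArg _ => 1
  | .lamF => 1
  | .inertF i => iWgt i + 2

def stWgt : List Frame → Nat
  | [] => 0
  | f :: s => frWgt f + stWgt s

def confWgt : Conf → Nat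
  | .eval t e s _ => fWgt t 0 e + stWgt s
  | .apply w s _ => wWgt w + stWgt s
  | .norm _ _ s => 1 + stWgt s

lemma stepNB_decr {c c' : Conf} (h : StepNB c c') : confWgt c' < confWgt c := by
  cases h with
  | r1 => simp [confWgt, stWgt, frWgt, fWgt]; omega
  | r2 => simp [confWgt, wWgt, fWgt]
  | r3 => simp [confWgt, fWgt, lkWgt]
  | r4 => simp [confWgt, fWgt, lkWgt]
  | r5 => simp [confWgt, stWgt, frWgt]; omega
  | r7 => simp [confWgt, stWgt, frWgt, wWgt, iWgt]; omega
  | @r8 s t e m _ =>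
    have := fWgt_shift (m + 1) t 0 e
    simp [confWgt, stWgt, frWgt, wWgt] at *
    omega
  | r9 => simp [confWgt, stWgt, frWgt, wWgt, iWgt]; omega
  | r10 => simp [confWgt, wWgt, iWgt]
  | r11 => simp [confWgt, stWgt, frWgt, wWgt]; omega
  | r12 => simp [confWgt, stWgt, frWgt]
  | r13 => simp [confWgt, stWgt, frWgt]

/-- the KNV transition relation without the β-contraction rule (6)
    admits no infinite sequence from a well-formed configuration. -/
theorem knv_nobeta_terminates :
    ¬ ∃ f : ℕ → Conf, WFConf (f 0) ∧ ∀ n, StepNB (f n) (f (n + 1)) := by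
  rintro ⟨f, -, hstep⟩
  have hd : ∀ n, confWgt (f (n + 1)) < confWgt (f n) := fun n => stepNB_decr (hstep n)
  have hle : ∀ n, confWgt (f n) + n ≤ confWgt (f 0) := by
    intro n
    induction n with
    | zero => simp
    | succ k ih => have := hd k; omega
  have := hle (confWgt (f 0) + 1)
  omega
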